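/- The following two statements are equivalent: (i) every digraph contains a vertex v with |N1+(v)| ≤ |N2+(v)|; (ii) for every digraph D and every arc-weighting w of D, there exists a vertex v with δ_v ≥ 0. -/

import Mathlib

open Finset

/-- The first out-neighborhood of `v`: all `u` with `v → u`. -/
def firstNbhd {V : Type*} [Fintype V] (adj : V → V → Prop) [DecidableRel adj] (v : V) :
    Finset V :=
  Finset.univ.filter (fun u => adj v u)

/-- The second out-neighborhood of `v`: all `u ≠ v` with `¬ v → u` and `v → x → u` for some `x`. -/
def secondNbhd {V : Type*} [Fintype V] [DecidableEq V] (adj : V → V → Prop)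
    [DecidableRel adj] (v : V) : Finset V :=
  Finset.univ.filter (fun u => u ≠ v ∧ ¬ adj v u ∧ ∃ x, adj v x ∧ adj x u)

/-- First neighborhood weight `α_v = Σ_{u ∈ N1+(v)} w(vu)`. -/
def alphaW {V : Type*} [Fintype V] (adj : V → V → Prop) [DecidableRel adj]
    (w : V → V → ℝ) (v : V) : ℝ :=
  ∑ u ∈ firstNbhd adj v, w v u

/-- `β_v(s) = max({0} ∪ {w(us) − w(vs) : v → u and u → s})`. -/
noncomputable def betaS {V : Type*} [Fintype V] (adj : V → V → Prop) [DecidableRel adj]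
    (w : V → V → ℝ) (v s : V) : ℝ :=
  (insert (0 : ℝ)
    ((Finset.univ.filter (fun u => adj v u ∧ adj u s)).image (fun u => w u s - w v s))).max'
    (Finset.insert_nonempty _ _)

/-- Second neighborhood weight `β_v = Σ_{s ∈ V} β_v(s)`. -/
noncomputable def betaW {V : Type*} [Fintype V] (adj : V → V → Prop) [DecidableRel adj]
    (w : V → V → ℝ) (v : V) : ℝ :=
  ∑ s, betaS adj w v s

/-- Neighborhood weight difference `δ_v = β_v − α_v`. -/
noncomputable def deltaW {V : Type*} [Fintype V] (adj : V → V → Prop) [DecidableRel adj]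
    (w : V → V → ℝ) (v : V) : ℝ :=
  betaW adj w v - alphaW adj w v

/-! Weighted → unweighted: give every arc weight `1`; then `α_v = |N1+(v)|` and
`β_v ≤ |N2+(v)|`.

Unweighted → weighted: for weights `n` in `ℕ`, replace every vertex `a` by copies `(a, j)` and
join `(a, i) → (b, j)` iff `j < n(a, b)`. A copy of `v` then has `α_v` out-neighbours, and its
second out-neighbours among the copies of `s` are the `(s, j)` with
`n(v, s) ≤ j < max_u n(u, s)`, at most `β_v(s)` of them. Real weights `w` are handled by
applying this to `⌊q w⌋`: the rounding changes `q δ_v` by at most `2|V|`, so some vertex has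
`δ_v ≥ -2|V| / q` for every `q`, and a vertex maximising `δ` has `δ_v ≥ 0`. -/

section Weights

variable {V : Type*} [Fintype V] (adj : V → V → Prop) [DecidableRel adj]

lemma betaS_nonneg (w : V → V → ℝ) (v s : V) : 0 ≤ betaS adj w v s :=
  le_max' _ _ (mem_insert_self _ _)

lemma le_betaS {w : V → V → ℝ} {v u s : V} (hvu : adj v u) (hus : adj u s) :
    w u s - w v s ≤ betaS adj w v s := by
  apply le_max'
  exact mem_insert_of_mem (mem_image.mpr ⟨u, by simp [hvu, hus], rfl⟩)

lemma betaS_le {w : V → V → ℝ} {v s : V} {c : ℝ} (hc : 0 ≤ c)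
    (h : ∀ u, adj v u → adj u s → w u s - w v s ≤ c) : betaS adj w v s ≤ c := by
  refine max'_le _ _ _ fun y hy => ?_
  rcases mem_insert.mp hy with rfl | hy
  · exact hc
  · obtain ⟨u, hu, rfl⟩ := mem_image.mp hy
    exact h u (mem_filter.mp hu).2.1 (mem_filter.mp hu).2.2

lemma alphaW_eq_sum {w : V → V → ℝ} (hw : ∀ a b, ¬ adj a b → w a b = 0) (v : V) :
    alphaW adj w v = ∑ u, w v u :=
  sum_subset (subset_univ _) fun u _ hu => hw v u (by simpa [firstNbhd] using hu)

lemma natCast_sub_le_betaS (n : V → V → ℕ) {v u s : V} (hvu : adj v u) (hus : adj u s) :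
    ((n u s - n v s : ℕ) : ℝ) ≤ betaS adj (fun a b => (n a b : ℝ)) v s := by
  rcases le_total (n u s) (n v s) with h | h
  · rw [Nat.sub_eq_zero_of_le h, Nat.cast_zero]
    exact betaS_nonneg adj _ v s
  · rw [Nat.cast_sub h]
    exact le_betaS adj (w := fun a b => (n a b : ℝ)) hvu hus

lemma deltaW_le_mul_deltaW_add {w w' : V → V → ℝ} {c e : ℝ} (hc : 0 ≤ c) (he : 0 ≤ e)
    (hlo : ∀ a b, w' a b ≤ c * w a b) (hhi : ∀ a b, c * w a b ≤ w' a b + e) (v : V) :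
    deltaW adj w' v ≤ c * deltaW adj w v + 2 * Fintype.card V * e := by
  have hβ (s : V) : betaS adj w' v s ≤ c * betaS adj w v s + e := by
    refine betaS_le adj (add_nonneg (mul_nonneg hc (betaS_nonneg adj w v s)) he) fun u hvu hus => ?_
    calc w' u s - w' v s ≤ c * (w u s - w v s) + e := by linarith [hlo u s, hhi v s]
      _ ≤ c * betaS adj w v s + e := by gcongr; exact le_betaS adj hvu hus
  have hα : c * alphaW adj w v ≤ alphaW adj w' v + Fintype.card V * e :=
    calc c * alphaW adj w v ≤ ∑ u ∈ firstNbhd adj v, (w' v u + e) := by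
          rw [alphaW, mul_sum]; exact sum_le_sum fun u _ => hhi v u
      _ = alphaW adj w' v + #(firstNbhd adj v) * e := by
          rw [sum_add_distrib, sum_const, nsmul_eq_mul, alphaW]
      _ ≤ alphaW adj w' v + Fintype.card V * e := by
          gcongr; exact card_le_univ _
  have hβ' : betaW adj w' v ≤ c * betaW adj w v + Fintype.card V * e :=
    calc betaW adj w' v ≤ ∑ s, (c * betaS adj w v s + e) := sum_le_sum fun s _ => hβ s
      _ = c * betaW adj w v + Fintype.card V * e := by
          rw [sum_add_distrib, ← mul_sum, sum_const, nsmul_eq_mul, card_univ, betaW]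
  rw [deltaW, deltaW]
  linarith

end Weights

section UnitWeights

variable {V : Type*} [Fintype V] (adj : V → V → Prop) [DecidableRel adj]

lemma alphaW_indicator (v : V) :
    alphaW adj (fun a b => if adj a b then 1 else 0) v = #(firstNbhd adj v) := by
  simp [alphaW, firstNbhd, filter_filter]

lemma betaW_indicator_le [DecidableEq V] (hasym : ∀ u v, adj u v → ¬ adj v u) (v : V) :
    betaW adj (fun a b => if adj a b then 1 else 0) v ≤ #(secondNbhd adj v) := by
  have hs (s : V) :
      betaS adj (fun a b => if adj a b then 1 else 0) v s ≤
        if s ∈ secondNbhd adj v then 1 else 0 := by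
    have h0 : (0 : ℝ) ≤ if s ∈ secondNbhd adj v then 1 else 0 := by split_ifs <;> norm_num
    refine betaS_le adj h0 fun u hvu hus => ?_
    by_cases hvs : adj v s
    · simpa [hvs, hus] using h0
    · have hsv : s ≠ v := by rintro rfl; exact hasym u s hus hvu
      have hmem : s ∈ secondNbhd adj v := by
        simp only [secondNbhd, mem_filter, mem_univ, true_and]
        exact ⟨hsv, hvs, u, hvu, hus⟩
      simp [hvs, hus, hmem]
  calc betaW adj _ v ≤ ∑ s, if s ∈ secondNbhd adj v then (1 : ℝ) else 0 :=
        sum_le_sum fun s _ => hs s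
    _ = #(secondNbhd adj v) := by simp

lemma card_firstNbhd_le_of_deltaW_indicator_nonneg [DecidableEq V]
    (hasym : ∀ u v, adj u v → ¬ adj v u) {v : V}
    (hv : 0 ≤ deltaW adj (fun a b => if adj a b then 1 else 0) v) :
    #(firstNbhd adj v) ≤ #(secondNbhd adj v) := by
  have hβ := betaW_indicator_le adj hasym v
  rw [deltaW, alphaW_indicator] at hv
  exact_mod_cast (by linarith : (#(firstNbhd adj v) : ℝ) ≤ #(secondNbhd adj v))

end UnitWeights

lemma card_filter_prod_eq_sum {A B : Type*} [Fintype A] [Fintype B] (P : A × B → Prop)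
    [DecidablePred P] : #{q | P q} = ∑ a, #{b | P (a, b)} := by
  simp only [card_filter, Fintype.sum_prod_type]

lemma Fin.card_filter_le_and_lt_le_sub {M : ℕ} (a b : ℕ) :
    #{j : Fin M | a ≤ j ∧ j < b} ≤ b - a := by
  calc #{j : Fin M | a ≤ j ∧ j < b} ≤ #(Ico a b) :=
        card_le_card_of_injOn Fin.val (fun j hj => by simpa using hj) Fin.val_injective.injOn
    _ = b - a := Nat.card_Ico a b

section BlowUp

variable {V : Type*}

-- Reducible, so that its decidability instance is that of `<` on `ℕ` (as in
-- `Fin.card_filter_val_lt`).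
abbrev blowUp (n : V → V → ℕ) (M : ℕ) (p q : V × Fin M) : Prop :=
  q.2 < n p.1 q.1

variable {adj : V → V → Prop} {n : V → V → ℕ} {M : ℕ}

lemma adj_of_blowUp (hn : ∀ a b, ¬ adj a b → n a b = 0) {p q : V × Fin M}
    (h : blowUp n M p q) : adj p.1 q.1 := by
  by_contra hpq
  simp [blowUp, hn _ _ hpq] at h

lemma blowUp_irrefl (hn : ∀ a b, ¬ adj a b → n a b = 0) (hirr : ∀ v, ¬ adj v v)
    (p : V × Fin M) : ¬ blowUp n M p p :=
  fun h => hirr _ (adj_of_blowUp hn h)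

lemma blowUp_asymm (hn : ∀ a b, ¬ adj a b → n a b = 0)
    (hasym : ∀ u v, adj u v → ¬ adj v u)
    (p q : V × Fin M) (h : blowUp n M p q) : ¬ blowUp n M q p :=
  fun h' => hasym _ _ (adj_of_blowUp hn h) (adj_of_blowUp hn h')

variable [Fintype V]

lemma card_firstNbhd_blowUp (hM : ∀ a b, n a b ≤ M) (p : V × Fin M) :
    #(firstNbhd (blowUp n M) p) = ∑ b, n p.1 b := by
  rw [firstNbhd, card_filter_prod_eq_sum]
  refine sum_congr rfl fun b _ => ?_
  exact Fin.card_filter_val_lt.trans (min_eq_right (hM _ _))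

variable [DecidableRel adj] [DecidableEq V]

lemma card_slice_secondNbhd_blowUp_le (hn : ∀ a b, ¬ adj a b → n a b = 0) (v : V) (i : Fin M)
    (s : V) : (#{j | (s, j) ∈ secondNbhd (blowUp n M) (v, i)} : ℝ) ≤
      betaS adj (fun a b => (n a b : ℝ)) v s := by
  set F := ({j | (s, j) ∈ secondNbhd (blowUp n M) (v, i)} : Finset (Fin M))
  rcases F.eq_empty_or_nonempty with hF | ⟨j₀, hj₀⟩
  · rw [hF, card_empty, Nat.cast_zero]
    exact betaS_nonneg adj _ v s
  obtain ⟨x, hvx, hxs⟩ : ∃ x, blowUp n M (v, i) x ∧ blowUp n M x (s, j₀) := by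
    simp only [F, secondNbhd, mem_filter, mem_univ, true_and] at hj₀
    exact hj₀.2.2
  obtain ⟨u, hu, hmax⟩ := exists_max_image {u | adj v u ∧ adj u s} (fun u => n u s)
    ⟨x.1, by simp [adj_of_blowUp hn hvx, adj_of_blowUp hn hxs]⟩
  have hsub : F ⊆ ({j | n v s ≤ j ∧ j < n u s} : Finset (Fin M)) := fun j hj => by
    simp only [F, secondNbhd, mem_filter, mem_univ, true_and] at hj ⊢
    obtain ⟨-, hvj, y, hvy, hyj⟩ := hj
    exact ⟨not_lt.1 hvj, hyj.trans_le (hmax y.1 (by simp [adj_of_blowUp hn hvy,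
      adj_of_blowUp hn hyj]))⟩
  calc (#F : ℝ) ≤ ((n u s - n v s : ℕ) : ℝ) := by
        exact_mod_cast (card_le_card hsub).trans (Fin.card_filter_le_and_lt_le_sub _ _)
    _ ≤ betaS adj (fun a b => (n a b : ℝ)) v s := by
        simp only [mem_filter, mem_univ, true_and] at hu
        exact natCast_sub_le_betaS adj n hu.1 hu.2

lemma card_secondNbhd_blowUp_le (hn : ∀ a b, ¬ adj a b → n a b = 0) (v : V) (i : Fin M) :
    (#(secondNbhd (blowUp n M) (v, i)) : ℝ) ≤ betaW adj (fun a b => (n a b : ℝ)) v := by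
  rw [secondNbhd, card_filter_prod_eq_sum, Nat.cast_sum]
  refine sum_le_sum fun s _ => ?_
  simpa only [secondNbhd, mem_filter, mem_univ, true_and] using
    card_slice_secondNbhd_blowUp_le hn v i s

lemma deltaW_nonneg_of_card_firstNbhd_blowUp_le (hn : ∀ a b, ¬ adj a b → n a b = 0)
    (hM : ∀ a b, n a b ≤ M) {v : V} {i : Fin M}
    (h : #(firstNbhd (blowUp n M) (v, i)) ≤ #(secondNbhd (blowUp n M) (v, i))) :
    0 ≤ deltaW adj (fun a b => (n a b : ℝ)) v := by
  have hα : alphaW adj (fun a b => (n a b : ℝ)) v = #(firstNbhd (blowUp n M) (v, i)) := by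
    rw [alphaW_eq_sum adj (fun a b hab => by simp [hn a b hab]), card_firstNbhd_blowUp hM,
      Nat.cast_sum]
  have hβ := card_secondNbhd_blowUp_le hn v i
  have hcard : (#(firstNbhd (blowUp n M) (v, i)) : ℝ) ≤ #(secondNbhd (blowUp n M) (v, i)) := by
    exact_mod_cast h
  rw [deltaW]
  linarith

end BlowUp

def SecondNeighborhoodConjecture : Prop :=
  ∀ (V : Type) [Fintype V] [DecidableEq V] (adj : V → V → Prop) [DecidableRel adj],
    Nonempty V → (∀ v, ¬ adj v v) → (∀ u v, adj u v → ¬ adj v u) →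
    ∃ v : V, #(firstNbhd adj v) ≤ #(secondNbhd adj v)

section SecondNeighborhood

variable {V : Type} [Fintype V] [DecidableEq V] {adj : V → V → Prop} [DecidableRel adj]

lemma SecondNeighborhoodConjecture.exists_deltaW_natCast_nonneg
    (H : SecondNeighborhoodConjecture) (hne : Nonempty V) (hirr : ∀ v, ¬ adj v v)
    (hasym : ∀ u v, adj u v → ¬ adj v u) {n : V → V → ℕ}
    (hn : ∀ a b, ¬ adj a b → n a b = 0) :
    ∃ v, 0 ≤ deltaW adj (fun a b => (n a b : ℝ)) v := by
  obtain ⟨M, hM⟩ := Finite.exists_le (Function.uncurry n)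
  obtain ⟨⟨v, i⟩, hvi⟩ := H (V × Fin (M + 1)) (blowUp n (M + 1)) ⟨(hne.some, 0)⟩
    (blowUp_irrefl hn hirr) (blowUp_asymm hn hasym)
  exact ⟨v, deltaW_nonneg_of_card_firstNbhd_blowUp_le hn
    (fun a b => (hM (a, b)).trans M.le_succ) hvi⟩

lemma SecondNeighborhoodConjecture.exists_neg_le_mul_deltaW
    (H : SecondNeighborhoodConjecture) (hne : Nonempty V) (hirr : ∀ v, ¬ adj v v)
    (hasym : ∀ u v, adj u v → ¬ adj v u) {w : V → V → ℝ} (hw0 : ∀ a b, 0 ≤ w a b)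
    (hwz : ∀ a b, ¬ adj a b → w a b = 0) (q : ℕ) :
    ∃ v, -(2 * Fintype.card V) ≤ q * deltaW adj w v := by
  obtain ⟨v, hv⟩ := H.exists_deltaW_natCast_nonneg hne hirr hasym
    (n := fun a b => ⌊q * w a b⌋₊) fun a b hab => by simp [hwz a b hab]
  refine ⟨v, ?_⟩
  have := deltaW_le_mul_deltaW_add adj q.cast_nonneg zero_le_one
    (fun a b => Nat.floor_le (mul_nonneg q.cast_nonneg (hw0 a b)))
    (fun a b => (Nat.lt_floor_add_one _).le) v
  linarith

lemma SecondNeighborhoodConjecture.exists_deltaW_nonneg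
    (H : SecondNeighborhoodConjecture) (hne : Nonempty V) (hirr : ∀ v, ¬ adj v v)
    (hasym : ∀ u v, adj u v → ¬ adj v u) {w : V → V → ℝ} (hw0 : ∀ a b, 0 ≤ w a b)
    (hwz : ∀ a b, ¬ adj a b → w a b = 0) : ∃ v, 0 ≤ deltaW adj w v := by
  obtain ⟨v, -, hv⟩ := exists_max_image univ (deltaW adj w) univ_nonempty
  refine ⟨v, le_of_forall_pos_le_add fun ε hε => ?_⟩
  obtain ⟨q, hq⟩ := exists_nat_gt (2 * Fintype.card V / ε)
  obtain ⟨u, hu⟩ := H.exists_neg_le_mul_deltaW hne hirr hasym hw0 hwz q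
  have hqε : 2 * Fintype.card V < q * ε := (div_lt_iff₀ hε).1 hq
  have hq0 : (0 : ℝ) < q := lt_of_le_of_lt (by positivity) hq
  nlinarith [hv u (mem_univ u)]

end SecondNeighborhood

/-- The second neighborhood conjecture is equivalent to its arc-weighted version:
(i) every (nonempty, loopless, 2-cycle-free) digraph has a vertex `v` with
`|N1+(v)| ≤ |N2+(v)|` if and only if
(ii) for every such digraph with a nonnegative arc-weighting `w` (zero on non-arcs),
there is a vertex `v` with `δ_v ≥ 0`. -/
theorem second_neighborhood_iff_arc_weighted :
    (∀ (V : Type) [Fintype V] [DecidableEq V] (adj : V → V → Prop) [DecidableRel adj],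
        Nonempty V →
        (∀ v, ¬ adj v v) →
        (∀ u v, adj u v → ¬ adj v u) →
        ∃ v : V, (firstNbhd adj v).card ≤ (secondNbhd adj v).card)
    ↔
    (∀ (V : Type) [Fintype V] [DecidableEq V] (adj : V → V → Prop) [DecidableRel adj],
        Nonempty V →
        (∀ v, ¬ adj v v) →
        (∀ u v, adj u v → ¬ adj v u) →
        ∀ w : V → V → ℝ,
          (∀ a b, 0 ≤ w a b) →
          (∀ a b, ¬ adj a b → w a b = 0) →
          ∃ v : V, 0 ≤ deltaW adj w v) := by
  constructor
  · exact fun H V _ _ adj _ hne hirr hasym w hw0 hwz =>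
      SecondNeighborhoodConjecture.exists_deltaW_nonneg H hne hirr hasym hw0 hwz
  · intro H V _ _ adj _ hne hirr hasym
    obtain ⟨v, hv⟩ := H V adj hne hirr hasym (fun a b => if adj a b then 1 else 0)
      (fun a b => by split_ifs <;> norm_num) (fun a b hab => if_neg hab)
    exact ⟨v, card_firstNbhd_le_of_deltaW_indicator_nonneg adj hasym hv⟩
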